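/- Let d = (d_1,…,d_r) be a dimension vector with d_1+⋯+d_r = n and let X(d) be the matrix associated to the horizontal line diagram L_h(d). Let D_1 ≥ D_2 ≥ ⋯ ≥ D_r be the entries of d rearranged in decreasing order. Then dim ker(X(d)^s) = D_1 + ⋯ + D_s for every 1 ≤ s ≤ r; in particular X(d)^r = 0, the Jordan canonical form of X(d) is given by the partition (1^{D_1−D_2}, 2^{D_2−D_3}, …, (r−1)^{D_{r−1}−D_r}, r^{D_r}), and the dual of the Jordan partition of X(d) is the multiset {d_1,…,d_r} of entries of the dimension vector. -/

import Mathlib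

open Matrix

def off (d : ℕ → ℕ) (c : ℕ) : ℕ := ∑ x ∈ Finset.range c, d x

/-- Lines of the horizontal line diagram `L_h(d)` (0-based labels, see the paper). -/
def IsHLine (d : ℕ → ℕ) (r : ℕ) (i j : ℕ) : Prop :=
  ∃ c c' k, c < c' ∧ c' < r ∧ k < d c ∧ k < d c' ∧
    (∀ c'', c < c'' → c'' < c' → d c'' ≤ k) ∧ i = off d c + k ∧ j = off d c' + k

open Classical in
/-- The matrix `X(d) = Σ_{lines i—j} E_{ij}` of the horizontal line diagram `L_h(d)`. -/
noncomputable def XH (d : ℕ → ℕ) (r n : ℕ) : Matrix (Fin n) (Fin n) ℂ :=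
  Matrix.of fun i j => if IsHLine d r (i : ℕ) (j : ℕ) then 1 else 0

/-!
Row `k` of `L_h(d)` consists of the `m_k` dots of height `k`, joined by lines into a single
chain, so `X(d)` sends the basis vector of a dot to that of its left neighbour in its row:
`X(d)` is a direct sum of nilpotent Jordan blocks of sizes `m_k`. Hence `X(d)^s` joins two dots
exactly when they lie in one row, `s` places apart, and `ker X(d)^s` is spanned by the basis
vectors of the first `s` dots of each row, so `dim ker X(d)^s = Σ_k min(s, m_k)`. Since `(m_k)`
is the partition conjugate to `D`, this sum equals `D_1 + ⋯ + D_s`.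
-/

open Finset

section RelationMatrix

variable {ι : Type*} [Fintype ι]

theorem of_ite_mul_of_ite {α : Type*} [NonAssocSemiring α] {P Q R : ι → ι → Prop}
    [DecidableRel P] [DecidableRel Q] [DecidableRel R]
    (hQ : ∀ m m' j, Q m j → Q m' j → m = m') (hR : ∀ i j, R i j ↔ ∃ m, P i m ∧ Q m j) :
    (of fun i j => if P i j then (1 : α) else 0) * (of fun i j => if Q i j then 1 else 0) =
      of fun i j => if R i j then 1 else 0 := by
  ext i j
  simp only [mul_apply, of_apply, ite_zero_mul_ite_zero, one_mul]
  by_cases h : ∃ m, P i m ∧ Q m j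
  · obtain ⟨m, hm⟩ := h
    rw [if_pos ((hR i j).2 ⟨m, hm⟩), sum_eq_single m
      (fun m' _ hm' => if_neg fun h' => hm' (hQ _ _ _ h'.2 hm.2)) (by simp), if_pos hm]
  · rw [if_neg fun h' => h ((hR i j).1 h'),
      sum_eq_zero fun m _ => if_neg fun h' => h ⟨m, h'⟩]

theorem finrank_ker_mulVecLin_of_ite {K : Type*} [Field K] {P : ι → ι → Prop} [DecidableRel P]
    (hP : ∀ i j j', P i j → P i j' → j = j') :
    Module.finrank K (LinearMap.ker (of fun i j => if P i j then (1 : K) else 0).mulVecLin) =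
      Nat.card {j // ¬∃ i, P i j} := by
  set restrict := LinearMap.funLeft K K (Subtype.val : {j // ∃ i, P i j} → ι) with hrestrict
  have hker : LinearMap.ker (of fun i j => if P i j then (1 : K) else 0).mulVecLin =
      LinearMap.ker restrict := by
    ext v
    simp only [LinearMap.mem_ker, mulVecLin_apply, funext_iff, hrestrict, LinearMap.funLeft_apply,
      Pi.zero_apply, mulVec, dotProduct, of_apply, ite_mul, one_mul, zero_mul, Subtype.forall]
    constructor
    · rintro hv j ⟨i, hij⟩
      rw [← hv i, sum_eq_single j (fun j' _ hj' => if_neg fun h => hj' (hP i _ _ h hij))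
        (by simp), if_pos hij]
    · intro hv i
      exact sum_eq_zero fun j _ => by split_ifs with h; exacts [hv j ⟨i, h⟩, rfl]
  have hrange : LinearMap.range restrict = ⊤ := LinearMap.range_eq_top.2
    (LinearMap.funLeft_surjective_of_injective _ _ _ Subtype.val_injective)
  have hsum := LinearMap.finrank_range_add_finrank_ker restrict
  rw [hrange, finrank_top, Module.finrank_fintype_fun_eq_card, Module.finrank_fintype_fun_eq_card,
    ← hker] at hsum
  rw [Nat.card_eq_fintype_card, Fintype.card_subtype_compl]
  omega

end RelationMatrix

theorem count_lt_eq_min (m n : ℕ) : Nat.count (· < m) n = min n m := by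
  induction n with
  | zero => simp
  | succ n ih => rw [Nat.count_succ, ih]; split_ifs <;> omega

theorem exists_count_eq_of_lt_count {p : ℕ → Prop} [DecidablePred p] {t c : ℕ}
    (h : t < Nat.count p c) : ∃ x < c, p x ∧ Nat.count p x = t := by
  have hcard : ∀ hf : (Set.ofPred p).Finite, t < #hf.toFinset :=
    fun hf => h.trans_le (Nat.count_le_card hf c)
  exact ⟨Nat.nth p t, Nat.nth_lt_of_lt_count h, Nat.nth_mem t hcard, Nat.count_nth hcard⟩

theorem count_and_count_lt_eq_min (p : ℕ → Prop) [DecidablePred p] (s r : ℕ) :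
    Nat.count (fun c => p c ∧ Nat.count p c < s) r = min s (Nat.count p r) := by
  induction r with
  | zero => simp
  | succ r ih =>
    rw [Nat.count_succ, Nat.count_succ, ih]
    by_cases hp : p r <;> by_cases hs : Nat.count p r < s <;> simp [hp, hs] <;> omega

section Diagram

variable {d : ℕ → ℕ} {r : ℕ}

theorem off_add_lt_off {c c' k : ℕ} (hcc' : c < c') (hk : k < d c) : off d c + k < off d c' :=
  calc off d c + k < off d c + d c := by omega
    _ = off d (c + 1) := (sum_range_succ d c).symm
    _ ≤ off d c' := sum_le_sum_of_subset (range_subset_range.2 hcc')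

theorem off_add_inj {c c' k k' : ℕ} (hk : k < d c) (hk' : k' < d c')
    (h : off d c + k = off d c' + k') : c = c' ∧ k = k' := by
  rcases lt_trichotomy c c' with hlt | rfl | hgt
  · have := off_add_lt_off hlt hk; omega
  · omega
  · have := off_add_lt_off hgt hk'; omega

theorem exists_off_add {i : ℕ} (hi : i < off d r) : ∃ c < r, ∃ k < d c, i = off d c + k := by
  induction r with
  | zero => simp [off] at hi
  | succ r ih =>
    by_cases h : i < off d r
    · obtain ⟨c, hc, k, hk, rfl⟩ := ih h
      exact ⟨c, by omega, k, hk, rfl⟩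
    · have : off d (r + 1) = off d r + d r := sum_range_succ d r
      exact ⟨r, by omega, i - off d r, by omega, by omega⟩

/-- `Nat.count (k < d ·) c` is the position of column `c` within row `k`, so `j` lies `s` dots
to the right of `i` in their common row `k`. -/
def IsHChain (d : ℕ → ℕ) (r s i j : ℕ) : Prop :=
  ∃ c c' k, c < r ∧ c' < r ∧ k < d c ∧ k < d c' ∧
    Nat.count (k < d ·) c' = Nat.count (k < d ·) c + s ∧ i = off d c + k ∧ j = off d c' + k

theorem isHLine_iff_isHChain_one {i j : ℕ} : IsHLine d r i j ↔ IsHChain d r 1 i j := by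
  constructor
  · rintro ⟨c, c', k, hcc', hc', hkc, hkc', hbetween, rfl, rfl⟩
    refine ⟨c, c', k, by omega, hc', hkc, hkc', le_antisymm ?_ ?_, rfl, rfl⟩
    · by_contra! hlt
      rw [← (Nat.count_succ_eq_succ_count_iff (p := (k < d ·))).2 hkc] at hlt
      obtain ⟨x, hx, hkx⟩ := Nat.exists_of_count_lt_count hlt
      simp only [Set.mem_Ico] at hx
      exact absurd (hbetween x (by omega) hx.2) (by omega)
    · exact ((Nat.count_succ_eq_succ_count_iff (p := (k < d ·))).2 hkc).symm.trans_le
        (Nat.count_monotone _ hcc')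
  · rintro ⟨c, c', k, hc, hc', hkc, hkc', hcount, rfl, rfl⟩
    have hcc' : c < c' := Nat.lt_of_count_lt_count (p := (k < d ·)) (by omega)
    refine ⟨c, c', k, hcc', hc', hkc, hkc', fun x hcx hxc' => ?_, rfl, rfl⟩
    by_contra! hkx
    have := Nat.count_strict_mono (p := (k < d ·)) hkc hcx
    have := Nat.count_strict_mono (p := (k < d ·)) hkx hxc'
    omega

theorem isHChain_zero_iff {i j : ℕ} : IsHChain d r 0 i j ↔ i = j ∧ i < off d r := by
  constructor
  · rintro ⟨c, c', k, hc, hc', hkc, hkc', hcount, rfl, rfl⟩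
    obtain rfl := Nat.count_injective (p := (k < d ·)) hkc hkc' hcount.symm
    exact ⟨rfl, off_add_lt_off hc hkc⟩
  · rintro ⟨rfl, hi⟩
    obtain ⟨c, hc, k, hk, rfl⟩ := exists_off_add hi
    exact ⟨c, c, k, hc, hc, hk, hk, rfl, rfl, rfl⟩

theorem isHChain_succ_iff {s i j : ℕ} :
    IsHChain d r (s + 1) i j ↔ ∃ m, IsHChain d r s i m ∧ IsHChain d r 1 m j := by
  constructor
  · rintro ⟨c, c', k, hc, hc', hkc, hkc', hcount, rfl, rfl⟩
    obtain ⟨x, hxc', hkx, hx⟩ := exists_count_eq_of_lt_count (p := (k < d ·))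
      (t := Nat.count (k < d ·) c + s) (c := c') (by omega)
    exact ⟨off d x + k, ⟨c, x, k, hc, by omega, hkc, hkx, hx, rfl, rfl⟩,
      ⟨x, c', k, by omega, hc', hkx, hkc', by omega, rfl, rfl⟩⟩
  · rintro ⟨m, ⟨c, x, k, hc, -, hkc, hkx, hx, rfl, rfl⟩,
      ⟨y, c', l, -, hc', hly, hlc', hy, hxy, rfl⟩⟩
    obtain ⟨rfl, rfl⟩ := off_add_inj hkx hly hxy
    exact ⟨c, c', k, hc, hc', hkc, hlc', by omega, rfl, rfl⟩

theorem IsHChain.eq_iff_eq {s i j i' j' : ℕ} (h : IsHChain d r s i j)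
    (h' : IsHChain d r s i' j') : i = i' ↔ j = j' := by
  obtain ⟨c, c', k, -, -, hkc, hkc', hcount, rfl, rfl⟩ := h
  obtain ⟨e, e', l, -, -, hle, hle', hcount', rfl, rfl⟩ := h'
  constructor
  · intro h
    obtain ⟨rfl, rfl⟩ := off_add_inj hkc hle h
    rw [Nat.count_injective (p := (k < d ·)) hkc' hle' (by omega)]
  · intro h
    obtain ⟨rfl, rfl⟩ := off_add_inj hkc' hle' h
    rw [Nat.count_injective (p := (k < d ·)) hkc hle (by omega)]

theorem IsHChain.lt_off {s i j : ℕ} (h : IsHChain d r s i j) : i < off d r ∧ j < off d r := by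
  obtain ⟨c, c', k, hc, hc', hkc, hkc', -, rfl, rfl⟩ := h
  exact ⟨off_add_lt_off hc hkc, off_add_lt_off hc' hkc'⟩

theorem not_isHChain_length {i j : ℕ} : ¬IsHChain d r r i j := by
  rintro ⟨c, c', k, -, hc', -, -, hcount, -, -⟩
  have : Nat.count (k < d ·) c' ≤ c' := Nat.count_le _
  omega

theorem exists_isHChain_iff {s c' k : ℕ} (hc' : c' < r) (hk : k < d c') :
    (∃ i, IsHChain d r s i (off d c' + k)) ↔ s ≤ Nat.count (k < d ·) c' := by
  constructor
  · rintro ⟨i, c, e, l, -, -, -, hle, hcount, -, he⟩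
    obtain ⟨rfl, rfl⟩ := off_add_inj hk hle he
    omega
  · intro hs
    obtain rfl | hs0 := Nat.eq_zero_or_pos s
    · exact ⟨_, c', c', k, hc', hc', hk, hk, rfl, rfl, rfl⟩
    · obtain ⟨c, hcc', hkc, hc⟩ := exists_count_eq_of_lt_count (p := (k < d ·))
        (t := Nat.count (k < d ·) c' - s) (c := c') (by omega)
      exact ⟨_, c, c', k, by omega, hc', hkc, hk, by omega, rfl, rfl⟩

end Diagram

section XHPow

open Classical

variable {d : ℕ → ℕ} {r n : ℕ}

theorem XH_pow_eq (hn : off d r = n) (s : ℕ) :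
    XH d r n ^ s = of fun i j : Fin n => if IsHChain d r s i j then (1 : ℂ) else 0 := by
  induction s with
  | zero =>
    ext i j
    simp only [pow_zero, one_apply, of_apply, isHChain_zero_iff, hn, i.2, and_true, Fin.val_inj]
  | succ s ih =>
    have hX : XH d r n = of fun i j : Fin n => if IsHChain d r 1 i j then (1 : ℂ) else 0 := by
      ext i j
      simp only [XH, of_apply, isHLine_iff_isHChain_one]
    rw [pow_succ, ih, hX]
    refine of_ite_mul_of_ite (fun m m' j hm hm' => Fin.ext ((hm.eq_iff_eq hm').2 rfl)) ?_
    intro i j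
    rw [isHChain_succ_iff]
    constructor
    · rintro ⟨m, him, hmj⟩
      exact ⟨⟨m, him.lt_off.2.trans_eq hn⟩, him, hmj⟩
    · rintro ⟨m, him, hmj⟩
      exact ⟨m, him, hmj⟩

theorem XH_pow_length_eq_zero (hn : off d r = n) : XH d r n ^ r = 0 := by
  rw [XH_pow_eq hn]
  ext i j
  simp [not_isHChain_length]

theorem card_not_exists_isHChain (hn : off d r = n) (s : ℕ) :
    Nat.card {j : Fin n // ¬∃ i : Fin n, IsHChain d r s i j} =
      ∑ k ∈ range n, Nat.count (fun c => k < d c ∧ Nat.count (k < d ·) c < s) r := by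
  rw [Nat.card_eq_fintype_card, Fintype.card_subtype,
    sum_congr rfl fun k _ => Nat.count_eq_card_filter_range _ r, ← card_sigma]
  symm
  refine card_bij (fun p hp => ⟨off d p.2 + p.1, ?_⟩) ?_ ?_ ?_
  · simp only [mem_sigma, mem_range, mem_filter] at hp
    exact (off_add_lt_off hp.2.1 hp.2.2.1).trans_eq hn
  · rintro ⟨k, c⟩ hp
    simp only [mem_sigma, mem_range, mem_filter] at hp
    simp only [mem_filter, mem_univ, true_and]
    rintro ⟨i, hi⟩
    exact absurd ((exists_isHChain_iff hp.2.1 hp.2.2.1).1 ⟨i, hi⟩) (not_le.2 hp.2.2.2)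
  · rintro ⟨k, c⟩ hp ⟨k', c'⟩ hp' h
    simp only [mem_sigma, mem_range, mem_filter] at hp hp'
    obtain ⟨rfl, rfl⟩ := off_add_inj hp.2.2.1 hp'.2.2.1 (Fin.mk.inj h)
    rfl
  · intro j hj
    simp only [mem_filter, mem_univ, true_and] at hj
    obtain ⟨c, hc, k, hk, hjck⟩ := exists_off_add (j.2.trans_eq hn.symm)
    refine ⟨⟨k, c⟩, ?_, Fin.ext hjck.symm⟩
    simp only [mem_sigma, mem_range, mem_filter]
    refine ⟨by omega, hc, hk, not_le.1 fun hs => ?_⟩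
    obtain ⟨i, hi⟩ := (exists_isHChain_iff hc hk).2 hs
    exact hj ⟨⟨i, hi.lt_off.1.trans_eq hn⟩, by rwa [hjck]⟩

theorem finrank_ker_XH_pow (hn : off d r = n) (s : ℕ) :
    Module.finrank ℂ (LinearMap.ker (XH d r n ^ s).mulVecLin) =
      ∑ k ∈ range n, min s (Nat.count (k < d ·) r) := by
  rw [XH_pow_eq hn,
    finrank_ker_mulVecLin_of_ite fun i j j' hj hj' => Fin.ext ((hj.eq_iff_eq hj').1 rfl),
    card_not_exists_isHChain hn]
  simp only [count_and_count_lt_eq_min]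

end XHPow

section ConjugatePartition

variable {D : ℕ → ℕ}

theorem count_comp_eq_of_perm {d : ℕ → ℕ} {r : ℕ} {σ : Equiv.Perm (Fin r)}
    (hσ : ∀ i : Fin r, D i = d (σ i)) (p : ℕ → Prop) [DecidablePred p] :
    Nat.count (fun c => p (d c)) r = Nat.count (fun i => p (D i)) r := by
  rw [Nat.count_eq_card_filter_range, Nat.count_eq_card_filter_range, card_filter, card_filter,
    ← Fin.sum_univ_eq_sum_range (fun c => if p (d c) then 1 else 0),
    ← Fin.sum_univ_eq_sum_range (fun i => if p (D i) then 1 else 0), ← Equiv.sum_comp σ]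
  simp only [hσ]

theorem lt_count_iff_of_antitone (hD : Antitone D) {r : ℕ} (hr : D r = 0) {i k : ℕ} :
    i < Nat.count (k < D ·) r ↔ k < D i := by
  constructor
  · intro hi
    by_contra! hki
    have : Nat.count (k < D ·) r ≤ Nat.count (k < D ·) i := by
      by_contra! hlt
      obtain ⟨x, hx, hkx⟩ := Nat.exists_of_count_lt_count hlt
      exact absurd (hD hx.1) (by omega)
    have := Nat.count_le (k < D ·) (n := i)
    omega
  · intro hki
    have hir : i < r := by
      by_contra! h
      have := hD h
      omega
    have : Nat.count (k < D ·) (i + 1) = i + 1 :=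
      Nat.count_iff_forall.2 fun j hj => hki.trans_le (hD (by omega))
    have := Nat.count_monotone (k < D ·) (show i + 1 ≤ r from hir)
    omega

theorem count_eq_min_of_antitone (hD : Antitone D) {r : ℕ} (hr : D r = 0) (k s : ℕ) :
    Nat.count (k < D ·) s = min s (Nat.count (k < D ·) r) := by
  rw [← count_lt_eq_min]
  exact le_antisymm (Nat.count_mono_left fun i _ h => (lt_count_iff_of_antitone hD hr).2 h)
    (Nat.count_mono_left fun i _ h => (lt_count_iff_of_antitone hD hr).1 h)

theorem sum_count_lt_eq_sum_min (N s : ℕ) :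
    ∑ k ∈ range N, Nat.count (k < D ·) s = ∑ i ∈ range s, min N (D i) := by
  simp_rw [← count_lt_eq_min, Nat.count_eq_card_filter_range, card_filter]
  exact sum_comm

end ConjugatePartition

theorem kernel_dims_of_XH_general (r n : ℕ) (d D : ℕ → ℕ)
    (hn : ∑ c ∈ Finset.range r, d c = n)
    (hperm : ∃ σ : Equiv.Perm (Fin r), ∀ i : Fin r, D (i : ℕ) = d ((σ i : Fin r) : ℕ))
    (hdec : ∀ i j, i ≤ j → j < r → D j ≤ D i)
    (hD0 : ∀ i, r ≤ i → D i = 0)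
    (b : ℕ → ℕ)
    (hb : ∀ s, b s = Module.finrank ℂ (LinearMap.ker ((XH d r n ^ s).mulVecLin))) :
    (∀ s, 1 ≤ s → s ≤ r → b s = ∑ i ∈ Finset.range s, D i) ∧
    XH d r n ^ r = 0 ∧
    (∀ s, 1 ≤ s → s ≤ r → 2 * b s - b (s - 1) - b (s + 1) = D (s - 1) - D s) ∧
    (∀ s, 1 ≤ s → s ≤ r → b s - b (s - 1) = D (s - 1)) := by
  obtain ⟨σ, hσ⟩ := hperm
  have hD : Antitone D := fun i j hij =>
    (lt_or_ge j r).elim (hdec i j hij) fun hj => (hD0 j hj).trans_le (Nat.zero_le _)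
  have hDn : ∀ i, D i ≤ n := fun i => (lt_or_ge i r).elim
    (fun hi => (hσ ⟨i, hi⟩).trans_le
      (hn ▸ single_le_sum (fun _ _ => Nat.zero_le _) (mem_range.2 (σ ⟨i, hi⟩).2)))
    (fun hi => (hD0 i hi).trans_le (Nat.zero_le _))
  have hb' : ∀ s, b s = ∑ i ∈ range s, D i := fun s => by
    rw [hb, finrank_ker_XH_pow hn]
    calc ∑ k ∈ range n, min s (Nat.count (k < d ·) r)
        = ∑ k ∈ range n, Nat.count (k < D ·) s := sum_congr rfl fun k _ => by
          rw [count_comp_eq_of_perm hσ (k < ·)]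
          exact (count_eq_min_of_antitone hD (hD0 r le_rfl) k s).symm
      _ = ∑ i ∈ range s, D i := by
          rw [sum_count_lt_eq_sum_min]
          exact sum_congr rfl fun i _ => min_eq_right (hDn i)
  refine ⟨fun s _ _ => hb' s, XH_pow_length_eq_zero hn, fun s hs _ => ?_, fun s hs _ => ?_⟩ <;>
  · obtain ⟨t, rfl⟩ := Nat.exists_eq_add_of_le' hs
    simp only [hb', sum_range_succ, Nat.add_sub_cancel]
    omega

/-- Let `D 0 ≥ D 1 ≥ ⋯ ≥ D (r−1)` be the entries of the dimension vector `d` rearranged in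
decreasing order (extended by `0`). Then, writing `b s = dim ker (X(d)^s)`:
`b s = D 0 + ⋯ + D (s−1)` for `1 ≤ s ≤ r`; `X(d)^r = 0`; the Jordan canonical form of
`X(d)` has exactly `2 b s − b (s−1) − b (s+1) = D (s−1) − D s` blocks of size `s`
(the partition `(1^{D_1−D_2}, …, r^{D_r})`); and the parts
`b s − b (s−1) = D (s−1)` of the dual Jordan partition are the entries of `d`. -/
theorem kernel_dims_of_XH (r n : ℕ) (d D : ℕ → ℕ)
    (hd : ∀ c, c < r → 0 < d c) (hn : ∑ c ∈ Finset.range r, d c = n)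
    (hperm : ∃ σ : Equiv.Perm (Fin r), ∀ i : Fin r, D (i : ℕ) = d ((σ i : Fin r) : ℕ))
    (hdec : ∀ i j, i ≤ j → j < r → D j ≤ D i)
    (hD0 : ∀ i, r ≤ i → D i = 0)
    (b : ℕ → ℕ)
    (hb : ∀ s, b s = Module.finrank ℂ (LinearMap.ker ((XH d r n ^ s).mulVecLin))) :
    (∀ s, 1 ≤ s → s ≤ r → b s = ∑ i ∈ Finset.range s, D i) ∧
    XH d r n ^ r = 0 ∧
    (∀ s, 1 ≤ s → s ≤ r → 2 * b s - b (s - 1) - b (s + 1) = D (s - 1) - D s) ∧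
    (∀ s, 1 ≤ s → s ≤ r → b s - b (s - 1) = D (s - 1)) :=
  kernel_dims_of_XH_general r n d D hn hperm hdec hD0 b hb
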